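/- No language accepted by a weak deterministic Büchi automaton has the dense oscillating sequence property: if L ⊆ Σ^ω is accepted by a deterministic weak automaton, then there is no sequence w₁, w₂, … with d(w_i, w_{i+1}) arbitrarily small at each step (chosen adaptively), w_i ∈ L for odd i and w_i ∉ L for even i. -/

import Mathlib

/-- A deterministic Büchi automaton on infinite words. -/
structure DBA (A Q : Type*) where
  delta : Q → A → Q
  init : Q
  acc : Set Q

/-- The unique run of a deterministic automaton on an infinite word. -/
def DBA.run {A Q : Type*} (M : DBA A Q) (w : ℕ → A) : ℕ → Q
  | 0 => M.init
  | n + 1 => M.delta (M.run w n) (w n)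

/-- The ω-language accepted by the deterministic Büchi automaton: the unique
run visits the accepting set infinitely often. -/
def DBA.Lang {A Q : Type*} (M : DBA A Q) : Set (ℕ → A) :=
  {w | {n | M.run w n ∈ M.acc}.Infinite}

/-- A deterministic automaton is weak: its state set partitions into
components (fibers of `c`) each entirely accepting or entirely
non-accepting, with a partial order on components such that transitions are
non-increasing. -/
def DBA.IsWeak {A Q : Type*} (M : DBA A Q) : Prop :=
  ∃ (ι : Type) (_ : PartialOrder ι) (c : Q → ι),
    (∀ q q', c q = c q' → (q ∈ M.acc ↔ q' ∈ M.acc)) ∧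
    (∀ q a, c (M.delta q a) ≤ c q)

/-- Length of the longest common prefix of two distinct infinite words. -/
noncomputable def commonLen {A : Type*} (w w' : ℕ → A) : ℕ :=
  sInf {n | w n ≠ w' n}

/-- The prefix distance on infinite words. -/
noncomputable def wdist {A : Type*} (w w' : ℕ → A) : ℝ :=
  letI := Classical.propDecidable (w = w')
  if w = w' then 0 else 1 / (commonLen w w' + 1)

/-- The dense oscillating sequence property for `L ⊆ Σ^ω`:
`∃w₁ ∀ε₁ ∃w₂ ∀ε₂ …` via an adaptive strategy `f` with
`f [ε₁,…,ε_k] = w_{k+1}`, `w₁ ∈ L`, `d(w_i,w_{i+1}) ≤ ε_i`, membership in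
`L` exactly for odd indices. -/
def DenseOsc {A : Type*} (L : Set (ℕ → A)) : Prop :=
  ∃ f : List ℝ → (ℕ → A),
    f [] ∈ L ∧
    ∀ εs : List ℝ, (∀ x ∈ εs, 0 < x) → ∀ ε : ℝ, 0 < ε →
      wdist (f εs) (f (εs ++ [ε])) ≤ ε ∧
      (f (εs ++ [ε]) ∈ L ↔ Odd εs.length)

/-!
Along any word, the run of a weak automaton moves down through the components; when `<` on
components is well founded it eventually settles in one, and the word is accepted iff that
component is accepting. Answer the oscillating strategy with tolerances so small that each new
word agrees with the previous one until the previous run has settled. At that moment both runs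
are in the same state, so the new run settles in a component no larger, and, membership having
flipped, in a different one: an infinite strictly decreasing sequence of components.
-/


lemma eq_of_wdist_le {A : Type*} {w w' : ℕ → A} {n : ℕ} (h : wdist w w' ≤ 1 / (n + 1))
    {k : ℕ} (hk : k < n) : w k = w' k := by
  by_cases he : w = w'
  · rw [he]
  rw [wdist, if_neg he, one_div_le_one_div (by positivity) (by positivity)] at h
  have hn : n ≤ commonLen w w' := by exact_mod_cast (add_le_add_iff_right 1).mp h
  by_contra hne
  exact Nat.notMem_of_lt_sInf (hk.trans_le hn) hne

namespace DenseOsc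

variable {A : Type*}

def play (f : List ℝ → (ℕ → A)) (ε : (ℕ → A) → ℝ) : ℕ → List ℝ
  | 0 => []
  | k + 1 => play f ε k ++ [ε (f (play f ε k))]

lemma length_play (f : List ℝ → (ℕ → A)) (ε : (ℕ → A) → ℝ) (k : ℕ) :
    (play f ε k).length = k := by
  induction k with
  | zero => rfl
  | succ k ih => simp [play, ih]

lemma pos_of_mem_play (f : List ℝ → (ℕ → A)) {ε : (ℕ → A) → ℝ} (hε : ∀ w, 0 < ε w) (k : ℕ) :
    ∀ x ∈ play f ε k, 0 < x := by
  induction k with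
  | zero => simp [play]
  | succ k ih =>
    simp only [play, List.mem_append, List.mem_singleton]
    rintro x (hx | rfl)
    exacts [ih x hx, hε _]

theorem exists_alternating_seq {L : Set (ℕ → A)} (hL : DenseOsc L) (n : (ℕ → A) → ℕ) :
    ∃ w : ℕ → ℕ → A, ∀ k, (∀ j < n (w k), w k j = w (k + 1) j) ∧ (w k ∈ L ↔ Even k) := by
  obtain ⟨f, hf₀, hf⟩ := hL
  set ε : (ℕ → A) → ℝ := fun w => 1 / (n w + 1)
  have hε : ∀ w, 0 < ε w := fun w => by positivity
  have step k := hf _ (pos_of_mem_play f hε k) _ (hε (f (play f ε k)))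
  simp only [length_play] at step
  refine ⟨fun k => f (play f ε k), fun k => ⟨fun j hj => eq_of_wdist_le (step k).1 hj, ?_⟩⟩
  cases k with
  | zero => exact iff_of_true hf₀ Even.zero
  | succ k => exact (step k).2.trans (by rw [Nat.even_add_one, Nat.not_even_iff_odd])

end DenseOsc

namespace DBA

variable {A Q : Type*} (M : DBA A Q)

lemma run_eq_of_forall_lt_eq {w w' : ℕ → A} {n : ℕ} (h : ∀ k < n, w k = w' k) :
    M.run w n = M.run w' n := by
  induction n with
  | zero => rfl
  | succ n ih =>
    rw [run, run, ih fun k hk => h k (hk.trans n.lt_succ_self), h n n.lt_succ_self]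

variable {ι : Type*} {c : Q → ι}

lemma mem_lang_iff_of_stable (hacc : ∀ q q', c q = c q' → (q ∈ M.acc ↔ q' ∈ M.acc))
    {w : ℕ → A} {N : ℕ} (hN : ∀ m, N ≤ m → c (M.run w N) = c (M.run w m)) :
    w ∈ M.Lang ↔ M.run w N ∈ M.acc := by
  refine ⟨fun h => ?_, fun h => (Set.Ici_infinite N).mono fun m hm => (hacc _ _ (hN m hm)).mp h⟩
  obtain ⟨m, hm, hNm⟩ := h.exists_gt N
  exact (hacc _ _ (hN m hNm.le)).mpr hm

variable [PartialOrder ι]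

lemma antitone_comp_run (hmono : ∀ q a, c (M.delta q a) ≤ c q) (w : ℕ → A) :
    Antitone (c ∘ M.run w) :=
  antitone_nat_of_succ_le fun _ => hmono _ _

lemma comp_run_le_of_forall_lt_eq (hmono : ∀ q a, c (M.delta q a) ≤ c q) {w w' : ℕ → A}
    {n N' : ℕ} (hN' : ∀ m, N' ≤ m → c (M.run w' N') = c (M.run w' m))
    (h : ∀ k < n, w k = w' k) : c (M.run w' N') ≤ c (M.run w n) :=
  calc c (M.run w' N') = c (M.run w' (max n N')) := hN' _ (le_max_right _ _)
    _ ≤ c (M.run w' n) := M.antitone_comp_run hmono w' (le_max_left _ _)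
    _ = c (M.run w n) := by rw [M.run_eq_of_forall_lt_eq h]

theorem not_denseOsc_of_wellFoundedLT [WellFoundedLT ι]
    (hacc : ∀ q q', c q = c q' → (q ∈ M.acc ↔ q' ∈ M.acc))
    (hmono : ∀ q a, c (M.delta q a) ≤ c q) : ¬ DenseOsc M.Lang := by
  intro hosc
  choose N hN using fun w => WellFoundedLT.antitone_chain_condition (M.antitone_comp_run hmono w)
  obtain ⟨w, hw⟩ := hosc.exists_alternating_seq N
  refine not_strictAnti_of_wellFoundedLT (fun k => c (M.run (w k) (N (w k))))
    (strictAnti_nat_of_succ_lt fun k => ?_)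
  refine (M.comp_run_le_of_forall_lt_eq hmono (hN _) (hw k).1).lt_of_ne fun heq => ?_
  have hacc_iff := hacc _ _ heq
  rw [← M.mem_lang_iff_of_stable hacc (hN _), ← M.mem_lang_iff_of_stable hacc (hN _),
    (hw k).2, (hw (k + 1)).2, Nat.even_add_one] at hacc_iff
  exact iff_not_self hacc_iff.symm

end DBA

/-- No language accepted by a weak deterministic Büchi automaton has the
dense oscillating sequence property. -/
theorem weak_deterministic_not_denseOsc {A Q : Type*} [Finite Q]
    (M : DBA A Q) (hW : M.IsWeak) :
    ¬ DenseOsc M.Lang := by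
  obtain ⟨ι, _, c, hacc, hmono⟩ := hW
  -- Components are compared inside the finite set `range c`, where `<` is well founded.
  exact M.not_denseOsc_of_wellFoundedLT (c := Set.rangeFactorization c)
    (fun q q' h => hacc q q' (congrArg Subtype.val h)) hmono
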